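/- Let G be a bipartite graph with κ(G) = k ≥ 1 and at least three vertices, uv a bisimplicial edge, and S a vertex cut of G ⊖ uv with |S| = k − 1 such that N_G(u)\{v} = S. Then (N_G(v)\{u}) ∩ S = ∅, and every connected component of (G ⊖ uv) − S contains at least one vertex of N_G(v)\{u}. -/

import Mathlib

open SimpleGraph

variable {V : Type*}

/-- `S` is a vertex cut set of `G`: deleting the vertices of `S` disconnects the graph. -/
def SimpleGraph.IsVertexCutSet (G : SimpleGraph V) (S : Set V) : Prop :=
  ¬ (G.induce Sᶜ).Preconnected

open scoped Classical in
/-- The vertex connectivity of a finite simple graph: the minimum size of a vertex cut if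
one exists (i.e. if the graph is not complete), and `|V| - 1` otherwise. -/
noncomputable def SimpleGraph.vertexConnectivity [Finite V] (G : SimpleGraph V) : ℕ :=
  if ∃ S : Set V, G.IsVertexCutSet S then
    sInf {n | ∃ S : Set V, S.ncard = n ∧ G.IsVertexCutSet S}
  else Nat.card V - 1

/-- An edge `uv` is bisimplicial if `N(u) ∪ N(v)` induces a complete bipartite graph
with parts `N(u)` and `N(v)`. -/
def SimpleGraph.IsBisimplicialEdge (G : SimpleGraph V) (u v : V) : Prop :=
  G.Adj u v ∧ ∀ x y, G.Adj u x → G.Adj v y → x ≠ y → G.Adj x y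

/-- A cycle (closed walk) has a chord: an edge of `G` joining two vertices of the cycle
that is not an edge of the cycle. -/
def SimpleGraph.CycleHasChord (G : SimpleGraph V) {a : V} (c : G.Walk a a) : Prop :=
  ∃ x y, x ∈ c.support ∧ y ∈ c.support ∧ G.Adj x y ∧ s(x, y) ∉ c.edges

/-- A graph is chordal bipartite if it is bipartite and every cycle of length at least 6
has a chord. -/
def SimpleGraph.ChordalBipartite (G : SimpleGraph V) : Prop :=
  G.Colorable 2 ∧ ∀ ⦃a : V⦄ (c : G.Walk a a), c.IsCycle → 6 ≤ c.length → G.CycleHasChord c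

/-! A common neighbour of `u` and `v` would close a triangle, impossible in a bipartite graph.
If a component of `(G ⊖ uv) - S` contained no neighbour of `v`, it would have no neighbour of
`u` either, since `N(u) ∖ {v} = S`; it would then be separated from `v` already in `G - S`,
making `S` a vertex cut of `G` of size `k - 1 < κ(G)`. -/

namespace SimpleGraph

variable {G : SimpleGraph V}

theorem Colorable.not_adj_of_adj_of_adj (hG : G.Colorable 2) {u v x : V} (huv : G.Adj u v)
    (hux : G.Adj u x) : ¬ G.Adj v x := fun hvx => by
  classical
  exact hG.cliqueFree (m := 3) (by norm_num) {u, v, x} (is3Clique_triple_iff.2 ⟨huv, hux, hvx⟩)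

theorem vertexConnectivity_le_ncard [Finite V] {S : Set V} (hS : G.IsVertexCutSet S) :
    G.vertexConnectivity ≤ S.ncard := by
  rw [vertexConnectivity, if_pos ⟨S, hS⟩]
  exact Nat.sInf_le ⟨S, rfl, hS⟩

theorem isVertexCutSet_of_adj_closed {S A : Set V}
    (hA : ∀ ⦃x y⦄, x ∈ A → y ∉ S → G.Adj x y → y ∈ A) {a b : V} (ha : a ∈ A) (haS : a ∉ S)
    (hb : b ∉ A) (hbS : b ∉ S) : G.IsVertexCutSet S := fun hpre => by
  obtain ⟨p⟩ := hpre ⟨a, haS⟩ ⟨b, hbS⟩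
  obtain ⟨d, -, hd, hd'⟩ := p.exists_boundary_dart {x : (Sᶜ : Set V) | x.1 ∈ A} ha hb
  exact hd' (hA hd d.snd.2 d.adj)

theorem ConnectedComponent.val_mem_of_adj {T : Set V} {c : (G.induce Tᶜ).ConnectedComponent}
    {x y : V} (hx : x ∈ Subtype.val '' c.supp) (hy : y ∉ T) (hxy : G.Adj x y) :
    y ∈ Subtype.val '' c.supp := by
  obtain ⟨x, hxc, rfl⟩ := hx
  exact ⟨⟨y, hy⟩, (c.mem_supp_congr_adj (v := x) (w := ⟨y, hy⟩) hxy).1 hxc, rfl⟩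

theorem isVertexCutSet_of_connectedComponent {T S : Set V}
    (c : (G.induce (T ∪ S)ᶜ).ConnectedComponent)
    (hc : ∀ x ∈ Subtype.val '' c.supp, ∀ t ∈ T, ¬ G.Adj x t) {t : V} (ht : t ∈ T)
    (htS : t ∉ S) : G.IsVertexCutSet S := by
  obtain ⟨w, rfl⟩ := c.exists_rep
  have hw : (w : V) ∈ Subtype.val '' ((G.induce (T ∪ S)ᶜ).connectedComponentMk w).supp :=
    ⟨w, rfl, rfl⟩
  refine isVertexCutSet_of_adj_closed (fun x y hx hyS hxy => ?_) hw (fun h => w.2 (Or.inr h))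
    (fun ⟨s, _, hs⟩ => s.2 (Or.inl (hs ▸ ht))) htS
  refine ConnectedComponent.val_mem_of_adj hx (fun hy => ?_) hxy
  rcases hy with hyT | hyS'
  · exact hc x hx y hyT hxy
  · exact hyS hyS'

end SimpleGraph

theorem stmt6_general [Finite V] (G : SimpleGraph V) (hbip : G.Colorable 2) (k : ℕ)
    (hk : G.vertexConnectivity = k) (hk1 : 1 ≤ k)
    (u v : V) (huv : G.IsBisimplicialEdge u v)
    (S : Set V)
    (hScard : S.ncard = k - 1) (hU : G.neighborSet u \ {v} = S) :
    (G.neighborSet v \ {u}) ∩ S = ∅ ∧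
    ∀ c : (G.induce (({u, v} : Set V) ∪ S)ᶜ).ConnectedComponent,
      ∃ x, ∃ hx : x ∈ (({u, v} : Set V) ∪ S)ᶜ,
        x ∈ G.neighborSet v \ {u} ∧
          (⟨x, hx⟩ : ((({u, v} : Set V) ∪ S)ᶜ : Set V)) ∈ c.supp := by
  refine ⟨?_, fun c => ?_⟩
  · rw [Set.eq_empty_iff_forall_notMem]
    rintro x ⟨⟨hvx, -⟩, hxS⟩
    rw [← hU] at hxS
    exact hbip.not_adj_of_adj_of_adj huv.1 hxS.1 hvx
  by_contra! hc
  have hc_isolated : ∀ x ∈ Subtype.val '' c.supp, ∀ t ∈ ({u, v} : Set V), ¬ G.Adj x t := by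
    rintro _ ⟨⟨x, hxT⟩, hxc, rfl⟩ t ht hxt
    have hxuv : x ≠ u ∧ x ≠ v :=
      ⟨fun h => hxT (Or.inl (Or.inl h)), fun h => hxT (Or.inl (Or.inr h))⟩
    rcases ht with rfl | rfl
    · exact hxT (Or.inr (hU ▸ ⟨hxt.symm, hxuv.2⟩))
    · exact hc x hxT ⟨hxt.symm, hxuv.1⟩ hxc
  have hvS : v ∉ S := fun hv => (hU ▸ hv : v ∈ G.neighborSet u \ {v}).2 rfl
  have hS_cut := isVertexCutSet_of_connectedComponent c hc_isolated (by simp) hvS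
  have hle := vertexConnectivity_le_ncard hS_cut
  omega

theorem stmt6 [Finite V] (G : SimpleGraph V) (hbip : G.Colorable 2) (k : ℕ)
    (hk : G.vertexConnectivity = k) (hk1 : 1 ≤ k) (hcard : 3 ≤ Nat.card V)
    (u v : V) (huv : G.IsBisimplicialEdge u v)
    (S : Set V) (hS : S ⊆ ({u, v} : Set V)ᶜ)
    (hcut : ¬ (G.induce (({u, v} : Set V) ∪ S)ᶜ).Preconnected)
    (hScard : S.ncard = k - 1) (hU : G.neighborSet u \ {v} = S) :
    (G.neighborSet v \ {u}) ∩ S = ∅ ∧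
    ∀ c : (G.induce (({u, v} : Set V) ∪ S)ᶜ).ConnectedComponent,
      ∃ x, ∃ hx : x ∈ (({u, v} : Set V) ∪ S)ᶜ,
        x ∈ G.neighborSet v \ {u} ∧
          (⟨x, hx⟩ : ((({u, v} : Set V) ∪ S)ᶜ : Set V)) ∈ c.supp :=
  stmt6_general G hbip k hk hk1 u v huv S hScard hU
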